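/- arXiv:1902.02897 — 5 statements merged into one kernel-verified Lean document; each statement's English description precedes it below -/
import Mathlib

section
/- Let F be a field, let k, n be positive integers, and let a, b, c, d ∈ F. For every u ∈ F with u ≠ 0 and a - c·u^{kn-k} ≠ 0, define x = (d·u^{kn} - b)/(a - c·u^{kn-k}), y = u^n, and t = (d·u^{kn} - b)/(u^k·(a - c·u^{kn-k})). Then these values satisfy both equations (c·t + d)·y^k = a·x + b and (t^n + c·t + d)·y^k = x^n + a·x + b. (In particular, the map σ : u ↦ (x, y, t) parametrizes a curve lying on the surface X : (t^n + c·t + d)·y^k = x^n + a·x + b and on the curve C ⊂ X cut out by (c·t + d)·y^k = a·x + b.) -/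
/-- The parametrization `σ : u ↦ (x, y, t)` lies on the surface
`X : (tⁿ + c·t + d)·yᵏ = xⁿ + a·x + b` and on the curve `C` cut out by
`(c·t + d)·yᵏ = a·x + b`. -/
theorem stmt_0 (F : Type*) [Field F] (k n : ℕ) (hk : 0 < k) (hn : 0 < n)
    (a b c d : F) (u : F) (hu : u ≠ 0)
    (hdenom : a - c * u ^ (k * n - k) ≠ 0)
    (x y t : F)
    (hx : x = (d * u ^ (k * n) - b) / (a - c * u ^ (k * n - k)))
    (hy : y = u ^ n)
    (ht : t = (d * u ^ (k * n) - b) / (u ^ k * (a - c * u ^ (k * n - k)))) :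
    (c * t + d) * y ^ k = a * x + b ∧
    (t ^ n + c * t + d) * y ^ k = x ^ n + a * x + b := by
  have hkk : k ≤ k * n := Nat.le_mul_of_pos_right k hn
  have hsplit : u ^ (k * n) = u ^ (k * n - k) * u ^ k := by
    rw [← pow_add]; congr 1; omega
  have hDx : (a - c * u ^ (k * n - k)) * x = d * u ^ (k * n) - b := by
    rw [hx, mul_div_cancel₀ _ hdenom]
  have htx : t * u ^ k = x := by
    rw [ht, hx]
    field_simp
  have hyk : y ^ k = u ^ (k * n) := by rw [hy, ← pow_mul, Nat.mul_comm]
  have h1 : (c * t + d) * y ^ k = a * x + b := by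
    rw [hyk, hsplit]
    rw [hsplit] at hDx
    linear_combination (c * u ^ (k * n - k)) * htx - hDx
  refine ⟨h1, ?_⟩
  have h2 : t ^ n * y ^ k = x ^ n := by
    have : y ^ k = (u ^ k) ^ n := by rw [hyk, ← pow_mul]
    rw [this, ← mul_pow, htx]
  linear_combination h2 + h1
end

section
/- Let K be an algebraically closed field, let k, n be positive integers with n ≥ 2 and gcd(k, n) = 1, and let a, b, c, d ∈ K with b ≠ 0 and a^n·d^{n-1} ≠ b^{n-1}·c^n. Then the affine set V = {(x, y, t) ∈ K³ : (t^n + c·t + d)·y^k = x^n + a·x + b and (c·t + d)·y^k = a·x + b} is irreducible; precisely, V is nonempty and for all polynomials p, q ∈ K[x, y, t], if the product p·q vanishes at every point of V, then p vanishes at every point of V or q vanishes at every point of V (i.e. the ideal of polynomials vanishing on V is prime). -/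
/-!
Substituting `x = t uᵏ`, `y = uⁿ` turns the second equation into
`F(u, t) = (c t + d) u^{nk} - a t uᵏ - b = 0` and makes the difference of the two equations,
`xⁿ = tⁿ yᵏ`, automatic. Conversely, as `gcd(k, n) = 1`, every point of `V` arises this way, so
`V` is the image of the plane curve `F = 0`. As a polynomial in `t` over `K[u]`, `F` is linear with
coefficients `c u^{nk} - a uᵏ` and `d u^{nk} - b`, which have no common root because
`aⁿ d^{n-1} ≠ b^{n-1} cⁿ`; so `F` is irreducible. By the Nullstellensatz the vanishing ideal of
`F = 0` is the prime ideal `(F)`, and the vanishing ideal of `V` is its preimage under the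
substitution.
-/

open Polynomial

theorem IsAlgClosed.exists_pow_eq_and_mul_pow_eq {K : Type*} [Field K] [IsAlgClosed K]
    {k n : ℕ} (hkn : k.Coprime n) (hn : 0 < n) {x y t : K} (hy : y ≠ 0)
    (h : x ^ n = t ^ n * y ^ k) : ∃ u, u ^ n = y ∧ t * u ^ k = x := by
  obtain ⟨u₀, hu₀⟩ := IsAlgClosed.exists_pow_nat_eq y hn
  have hu₀0 : u₀ ≠ 0 := by rintro rfl; exact hy (hu₀ ▸ zero_pow hn.ne')
  rcases eq_or_ne t 0 with rfl | ht
  · rw [zero_pow hn.ne', zero_mul, pow_eq_zero_iff hn.ne'] at h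
    exact ⟨u₀, hu₀, by simp [h]⟩
  -- `u₀` is off by the `n`-th root of unity `ζ`, which is a `k`-th power since `k` is prime to `n`
  set ζ := x / (t * u₀ ^ k)
  have hζ : ζ ^ n = 1 := by
    rw [div_pow, h, mul_pow, ← hu₀, ← pow_mul, ← pow_mul, mul_comm k n,
      div_self (by simp [ht, hu₀0])]
  obtain ⟨m, hm⟩ :=
    exists_pow_eq_self_of_coprime (hkn.coprime_dvd_right (orderOf_dvd_of_pow_eq_one hζ))
  refine ⟨ζ ^ m * u₀, ?_, ?_⟩
  · rw [mul_pow, ← pow_mul, mul_comm m n, pow_mul, hζ, one_pow, one_mul, hu₀]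
  · rw [mul_pow, ← pow_mul, mul_comm m k, pow_mul, hm, mul_left_comm]
    exact div_mul_cancel₀ x (by simp [ht, hu₀0])

namespace MvPolynomial

variable {K : Type*} [Field K] {σ τ : Type*}

theorem vanishingIdeal_image_eq_comap_bind₁ (g : τ → MvPolynomial σ K) (S : Set (σ → K)) :
    vanishingIdeal K ((fun w i => aeval w (g i)) '' S) = (vanishingIdeal K S).comap (bind₁ g) := by
  ext p
  simp [aeval_bind₁]

variable [IsAlgClosed K] [Finite σ]

theorem zeroLocus_span_singleton_nonempty {F : MvPolynomial σ K} (hF : ¬IsUnit F) :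
    (zeroLocus K (Ideal.span {F})).Nonempty := by
  by_contra! h
  apply hF
  rw [← Ideal.span_singleton_eq_top, ← Ideal.radical_eq_top,
    ← vanishingIdeal_zeroLocus_eq_radical (K := K), h, vanishingIdeal_empty]

theorem isPrime_vanishingIdeal_image_zeroLocus {F : MvPolynomial σ K} (hF : Prime F)
    (g : τ → MvPolynomial σ K) :
    (vanishingIdeal K ((fun w i => aeval w (g i)) '' zeroLocus K (Ideal.span {F}))).IsPrime := by
  have : (Ideal.span {F}).IsPrime := (Ideal.span_singleton_prime hF.ne_zero).mpr hF
  rw [vanishingIdeal_image_eq_comap_bind₁, IsPrime.vanishingIdeal_zeroLocus]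
  exact Ideal.IsPrime.comap _

end MvPolynomial

noncomputable section Curve

variable {K : Type*} [Field K] (a b c d : K) (k n : ℕ)

def curveLocus : Set (Fin 3 → K) :=
  {v | (v 2 ^ n + c * v 2 + d) * v 1 ^ k = v 0 ^ n + a * v 0 + b ∧
    (c * v 2 + d) * v 1 ^ k = a * v 0 + b}

def curveCoeffLead : K[X] := C c * X ^ (n * k) - C a * X ^ k

def curveCoeffConst : K[X] := C d * X ^ (n * k) - C b

-- `u = X 0` and `t = X 1`
def curvePoly : MvPolynomial (Fin 2) K :=
  Bivariate.equivMvPolynomial K (C (curveCoeffLead a c k n) * X + C (curveCoeffConst b d k n))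

variable (K) in
def curveParam : Fin 3 → MvPolynomial (Fin 2) K :=
  ![MvPolynomial.X 1 * MvPolynomial.X 0 ^ k, MvPolynomial.X 0 ^ n, MvPolynomial.X 1]

theorem aeval_curvePoly (w : Fin 2 → K) :
    MvPolynomial.aeval w (curvePoly a b c d k n) =
      (c * w 1 + d) * w 0 ^ (n * k) - a * w 1 * w 0 ^ k - b := by
  simp [curvePoly, curveCoeffLead, curveCoeffConst]
  ring

theorem aeval_curveParam (w : Fin 2 → K) :
    (fun i => MvPolynomial.aeval w (curveParam K k n i)) =
      (![w 1 * w 0 ^ k, w 0 ^ n, w 1] : Fin 3 → K) := by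
  ext i
  fin_cases i <;> simp [curveParam]

variable {a b c d k n}

theorem curveCoeffLead_ne_zero (hkn : k ≠ n * k) (hac : a ≠ 0 ∨ c ≠ 0) :
    curveCoeffLead a c k n ≠ 0 := by
  intro h
  have hk := congr_arg (coeff · k) h
  have hnk := congr_arg (coeff · (n * k)) h
  simp [curveCoeffLead, coeff_X_pow, hkn, hkn.symm] at hk hnk
  tauto

theorem isCoprime_curveCoeffLead_curveCoeffConst [IsAlgClosed K] (hk : 0 < k) (hn : 0 < n)
    (hb : b ≠ 0) (hiso : a ^ n * d ^ (n - 1) ≠ b ^ (n - 1) * c ^ n) :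
    IsCoprime (curveCoeffLead a c k n) (curveCoeffConst b d k n) := by
  rw [isCoprime_iff_aeval_ne_zero_of_isAlgClosed K K]
  intro r
  by_contra! ⟨hA, hB⟩
  simp only [curveCoeffLead, curveCoeffConst, aeval_X, map_sub, map_mul, aeval_C,
    map_pow, Algebra.algebraMap_self, RingHom.id_apply, sub_eq_zero] at hA hB
  have hr : r ≠ 0 := by
    rintro rfl
    simp [hk.ne', hn.ne', hb.symm] at hB
  obtain ⟨m, rfl⟩ : ∃ m, n = m + 1 := ⟨n - 1, by omega⟩
  -- eliminate `r` between `c r^{nk} = a r^k` and `d r^{nk} = b`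
  have key : (a ^ (m + 1) * d ^ m - b ^ m * c ^ (m + 1)) * r ^ ((m + 1) * (m + 1) * k) = 0 := by
    have e1 := congr_arg (· ^ (m + 1)) hA
    have e2 := congr_arg (· ^ m) hB
    linear_combination (-(d ^ m * r ^ ((m + 1) * m * k))) * e1 +
      (c ^ (m + 1) * r ^ ((m + 1) * (m + 1) * k)) * e2
  exact mul_ne_zero (sub_ne_zero.mpr hiso) (pow_ne_zero _ hr) key

theorem irreducible_curvePoly [IsAlgClosed K] (hk : 0 < k) (hn : 2 ≤ n) (hb : b ≠ 0)
    (hiso : a ^ n * d ^ (n - 1) ≠ b ^ (n - 1) * c ^ n) :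
    Irreducible (curvePoly a b c d k n) := by
  have hac : a ≠ 0 ∨ c ≠ 0 := by
    by_contra! ⟨rfl, rfl⟩
    simp [zero_pow (by omega : n ≠ 0)] at hiso
  have hkn : k ≠ n * k := by nlinarith
  refine (MulEquiv.irreducible_iff (Bivariate.equivMvPolynomial K).toMulEquiv).mpr ?_
  exact irreducible_C_mul_X_add_C (curveCoeffLead_ne_zero hkn hac)
    (isCoprime_curveCoeffLead_curveCoeffConst hk (by omega) hb hiso).isRelPrime

theorem curveLocus_eq_image_zeroLocus [IsAlgClosed K] (hk : 0 < k) (hn : 0 < n)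
    (hkn : k.Coprime n) (hb : b ≠ 0) :
    curveLocus a b c d k n = (fun w i => MvPolynomial.aeval w (curveParam K k n i)) ''
      MvPolynomial.zeroLocus K (Ideal.span {curvePoly a b c d k n}) := by
  ext v
  simp only [MvPolynomial.zeroLocus_span, Set.mem_singleton_iff, forall_eq, Set.mem_image,
    Set.mem_ofPred_eq, aeval_curvePoly, aeval_curveParam, curveLocus]
  constructor
  · rintro ⟨h₁, h₂⟩
    have hy : v 1 ≠ 0 := by
      intro hy
      simp only [hy, zero_pow hk.ne', mul_zero] at h₁ h₂
      have hx : v 0 = 0 := pow_eq_zero_iff hn.ne' |>.mp (by linear_combination h₂ - h₁)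
      simp [hx] at h₂
      exact hb h₂.symm
    obtain ⟨u, hu, hxu⟩ := IsAlgClosed.exists_pow_eq_and_mul_pow_eq (x := v 0) (t := v 2)
      hkn hn hy (by linear_combination h₂ - h₁)
    refine ⟨![u, v 2], ?_, ?_⟩
    · simp only [Matrix.cons_val_zero, Matrix.cons_val_one]
      rw [pow_mul, hu]
      linear_combination h₂ - a * hxu
    · ext i
      fin_cases i <;> simp [hu, hxu]
  · rintro ⟨w, hw, rfl⟩
    simp only [Matrix.cons_val_zero, Matrix.cons_val_one, Matrix.cons_val_two, Matrix.tail_cons,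
      Matrix.head_cons]
    constructor <;> linear_combination hw

end Curve

/-- Geometric irreducibility of the curve `C` cut out of the surface
`X : (tⁿ + c·t + d)·yᵏ = xⁿ + a·x + b` by `(c·t + d)·yᵏ = a·x + b`,
for coprime `k` and `n`: the affine locus `V` over an algebraically closed
field is nonempty and its vanishing ideal is prime. -/
theorem stmt_1 (K : Type*) [Field K] [IsAlgClosed K] (k n : ℕ)
    (hk : 0 < k) (hn : 2 ≤ n) (hcop : Nat.Coprime k n)
    (a b c d : K) (hb : b ≠ 0)
    (hiso : a ^ n * d ^ (n - 1) ≠ b ^ (n - 1) * c ^ n)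
    (V : Set (Fin 3 → K))
    (hV : V = {v | (v 2 ^ n + c * v 2 + d) * v 1 ^ k = v 0 ^ n + a * v 0 + b ∧
                   (c * v 2 + d) * v 1 ^ k = a * v 0 + b}) :
    V.Nonempty ∧
    ∀ p q : MvPolynomial (Fin 3) K,
      (∀ v ∈ V, MvPolynomial.eval v (p * q) = 0) →
      (∀ v ∈ V, MvPolynomial.eval v p = 0) ∨ (∀ v ∈ V, MvPolynomial.eval v q = 0) := by
  have hF : Prime (curvePoly a b c d k n) := (irreducible_curvePoly hk hn hb hiso).prime
  rw [show V = curveLocus a b c d k n from hV,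
    curveLocus_eq_image_zeroLocus hk (by omega) hcop hb]
  exact ⟨(MvPolynomial.zeroLocus_span_singleton_nonempty hF.not_isUnit).image _,
    fun p q hpq => (MvPolynomial.isPrime_vanishingIdeal_image_zeroLocus hF _).mem_or_mem hpq⟩
end

section
/- Let L be a number field, let k ≥ 2 be an integer, and let f ∈ L[u] be a nonzero polynomial. Suppose f has a root α in an algebraic closure of L whose multiplicity m (the root multiplicity of α in f) is not divisible by k. Then the set of classes in Lˣ/(Lˣ)^k of the values f(u), as u ranges over those elements of L with f(u) ≠ 0, is infinite. -/
/-!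
Write `f = g ^ m * h` with `g` the minimal polynomial of `α` and `g ∤ h`; then `m` is the root
multiplicity of `α`. If only finitely many classes occurred, then outside a finite set of places
`v` every value `f(u)` would have `ord_v (f u)` divisible by `k`. A Euclid-style argument with
norms (Schur's theorem) gives infinitely many places `v` at which `g` has a root `x` modulo `v`;
for all but finitely many of them the coefficients involved are `v`-integral, and the Bézout
identities for `g, g'` and for `g, h` survive reduction modulo `v`. So `g'(x)` is a `v`-unit, and
moving `x` by a uniformizer if necessary gives `u` with `ord_v (g u) = 1` and `h(u)` a `v`-unit.
Then `ord_v (f u) = m`, which `k` does not divide.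
-/

open Polynomial WithZero NumberField Filter IsDedekindDomain

theorem WithZero.le_exp_neg_one_of_lt_one {x : ℤᵐ⁰} (hx : x < 1) : x ≤ exp (-1) := by
  rwa [← lt_mul_exp_iff_le exp_ne_zero, ← exp_add, neg_add_cancel, exp_zero]

theorem WithZero.exp_neg_one_lt_one : exp (-1 : ℤ) < 1 := by
  rw [← exp_zero, exp_lt_exp]
  norm_num

theorem WithZero.dvd_of_exp_eq_pow {a : ℤ} {γ : ℤᵐ⁰} {k : ℕ} (h : exp a = γ ^ k) :
    (k : ℤ) ∣ a :=
  ⟨log γ, by rw [← log_exp a, h, log_pow, nsmul_eq_mul]⟩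

namespace Valuation

variable {K : Type*} [Field K]

section

variable {Γ₀ : Type*} [LinearOrderedCommGroupWithZero Γ₀] (v : Valuation K Γ₀)

theorem map_eval_le_one {p : K[X]} (hp : ∀ i, v (p.coeff i) ≤ 1) {x : K} (hx : v x ≤ 1) :
    v (p.eval x) ≤ 1 := by
  rw [eval_eq_sum_range]
  exact v.map_sum_le fun i _ => by
    rw [map_mul, map_pow]
    exact mul_le_one' (hp i) (pow_le_one' hx i)

theorem exists_binomExpansion_of_le_one {p : K[X]} (hp : ∀ i, v (p.coeff i) ≤ 1) {x t : K}
    (hx : v x ≤ 1) (ht : v t ≤ 1) :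
    ∃ c, v c ≤ 1 ∧ p.eval (x + t) = p.eval x + p.derivative.eval x * t + c * t ^ 2 := by
  have hcoeffs : (p.coeffs : Set K) ⊆ v.integer := by
    intro c hc
    obtain ⟨n, -, rfl⟩ := mem_coeffs_iff.1 hc
    exact hp n
  obtain ⟨q, rfl⟩ : ∃ q : v.integer[X], q.map v.integer.subtype = p :=
    ⟨_, map_toSubring p v.integer hcoeffs⟩
  obtain ⟨c, hc⟩ := q.binomExpansion ⟨x, hx⟩ ⟨t, ht⟩
  refine ⟨c, c.2, ?_⟩
  have hev (r : v.integer[X]) (y : v.integer) :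
      (r.map v.integer.subtype).eval (y : K) = r.eval y :=
    eval_map_apply (p := r) v.integer.subtype y
  have := congrArg Subtype.val hc
  simp only [← hev, Subring.coe_add, Subring.coe_mul, Subring.coe_pow] at this
  rwa [derivative_map]

theorem map_eval_eq_one_of_add_mul_eq_one {g h A B : K[X]} (hAB : A * g + B * h = 1)
    (hA : ∀ i, v (A.coeff i) ≤ 1) (hB : ∀ i, v (B.coeff i) ≤ 1) (hh : ∀ i, v (h.coeff i) ≤ 1)
    {x : K} (hx : v x ≤ 1) (hgx : v (g.eval x) < 1) : v (h.eval x) = 1 := by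
  have hAg : v (A.eval x * g.eval x) < 1 := by
    rw [map_mul]
    exact (mul_le_of_le_one_left' (v.map_eval_le_one hA hx)).trans_lt hgx
  have hBh : v (B.eval x * h.eval x) = 1 := by
    have := congrArg (eval x) hAB
    simp only [eval_add, eval_mul, eval_one] at this
    rw [← v.map_one_sub_of_lt hAg, ← this, add_sub_cancel_left]
  refine le_antisymm (v.map_eval_le_one hh hx) ?_
  calc 1 = v (B.eval x) * v (h.eval x) := by rw [← map_mul, hBh]
    _ ≤ v (h.eval x) := mul_le_of_le_one_left' (v.map_eval_le_one hB hx)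

end

variable (v : Valuation K ℤᵐ⁰)

theorem exists_map_eval_eq_exp_neg_one {p : K[X]} (hp : ∀ i, v (p.coeff i) ≤ 1) {x ϖ : K}
    (hx : v x ≤ 1) (hpx : v (p.eval x) < 1) (hp'x : v (p.derivative.eval x) = 1)
    (hϖ : v ϖ = exp (-1)) : ∃ y, v y ≤ 1 ∧ v (p.eval y) = exp (-1) := by
  rcases (le_exp_neg_one_of_lt_one hpx).eq_or_lt with hpx | hpx
  · exact ⟨x, hx, hpx⟩
  have hϖ1 : v ϖ ≤ 1 := hϖ ▸ exp_neg_one_lt_one.le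
  obtain ⟨c, hc, hexp⟩ := v.exists_binomExpansion_of_le_one hp hx hϖ1
  have hrest : v (p.eval x + c * ϖ ^ 2) < exp (-1) := by
    refine v.map_add_lt hpx ?_
    rw [map_mul]
    refine (mul_le_of_le_one_left' hc).trans_lt ?_
    rw [map_pow, hϖ, ← exp_nsmul, exp_lt_exp]
    norm_num
  refine ⟨x + ϖ, v.map_add_le hx hϖ1, ?_⟩
  rw [hexp, add_right_comm, v.map_add_eq_of_lt_right] <;> rw [map_mul, hp'x, one_mul, hϖ]
  exact hrest

end Valuation

namespace IsDedekindDomain.HeightOneSpectrum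

variable {R K : Type*} [CommRing R] [IsDedekindDomain R] [Field K] [Algebra R K]
  [IsFractionRing R K]

theorem finite_setOf_valuation_ne_one {x : K} (hx : x ≠ 0) :
    {v : HeightOneSpectrum R | v.valuation K x ≠ 1}.Finite := by
  refine ((Support.finite R x).union (Support.finite R x⁻¹)).subset fun v hv => ?_
  rcases hv.lt_or_gt with hlt | hgt
  · exact Or.inr (((v.valuation K).val_lt_one_iff hx).1 hlt)
  · exact Or.inl hgt

theorem finite_setOf_exists_one_lt_valuation_coeff (p : K[X]) :
    {v : HeightOneSpectrum R | ∃ i, 1 < v.valuation K (p.coeff i)}.Finite := by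
  refine (p.support.finite_toSet.biUnion fun i _ => Support.finite R (p.coeff i)).subset ?_
  rintro v ⟨i, hi⟩
  have hi0 : p.coeff i ≠ 0 := by rintro h; simp [h] at hi
  exact Set.mem_biUnion (mem_support_iff.2 hi0) hi

theorem exists_ne_zero_forall_mem_asIdeal {T : Set (HeightOneSpectrum R)} (hT : T.Finite) :
    ∃ z : R, z ≠ 0 ∧ ∀ v ∈ T, z ∈ v.asIdeal := by
  choose a ha ha0 using fun v : HeightOneSpectrum R =>
    Submodule.exists_mem_ne_zero_of_ne_bot v.ne_bot
  refine ⟨∏ v ∈ hT.toFinset, a v, Finset.prod_ne_zero_iff.2 fun v _ => ha0 v, fun v hv => ?_⟩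
  exact Ideal.mem_of_dvd _ (Finset.dvd_prod_of_mem a (hT.mem_toFinset.2 hv)) (ha v)

theorem finite_setOf_exists_mk_mem_valuation_ne_pow (k : ℕ)
    {S : Set (Kˣ ⧸ (powMonoidHom k : Kˣ →* Kˣ).range)} (hS : S.Finite) :
    {v : HeightOneSpectrum R | ∃ x : Kˣ, (x : Kˣ ⧸ (powMonoidHom k : Kˣ →* Kˣ).range) ∈ S ∧
      ∀ γ, v.valuation K x ≠ γ ^ k}.Finite := by
  refine (hS.biUnion fun q _ => finite_setOf_valuation_ne_one (R := R)
    (q.out : Kˣ).ne_zero).subset ?_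
  rintro v ⟨x, hxS, hx⟩
  refine Set.mem_biUnion hxS fun hv => ?_
  obtain ⟨⟨_, y, rfl⟩, hy⟩ := QuotientGroup.mk_out_eq_mul (powMonoidHom k : Kˣ →* Kˣ).range x
  refine hx (v.valuation K (y⁻¹ : Kˣ)) ?_
  have := congrArg (fun z : Kˣ => v.valuation K z) hy
  simp only [hv, Units.val_mul, powMonoidHom_apply, Units.val_pow_eq_pow_val, map_mul,
    map_pow] at this
  rw [Units.val_inv_eq_inv_val, map_inv₀, inv_pow]
  exact eq_inv_of_mul_eq_one_left this.symm

end IsDedekindDomain.HeightOneSpectrum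

namespace NumberField

variable {L : Type*} [Field L] [NumberField L]

theorem tendsto_abs_norm_eval_natCast_atTop {P : L[X]} (hP : 0 < P.degree) :
    Tendsto (fun n : ℕ => |(Algebra.norm ℚ (P.eval (n : L)) : ℝ)|) atTop atTop := by
  refine tendsto_atTop.2 fun B => ?_
  have hplaces : ∀ᶠ n : ℕ in atTop, ∀ w : InfinitePlace L, max B 1 ≤ w (P.eval (n : L)) := by
    refine eventually_all.2 fun w => ?_
    refine (P.tendsto_abv_atTop w.1 hP ?_).eventually_ge_atTop _
    simpa [Function.comp_def, ← InfinitePlace.coe_apply, w.map_natCast]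
      using tendsto_natCast_atTop_atTop
  filter_upwards [hplaces] with n hn
  rw [← Rat.cast_abs, ← InfinitePlace.prod_eq_abs_norm]
  calc B ≤ max B 1 := le_max_left _ _
    _ ≤ max B 1 ^ Module.finrank ℚ L := le_self_pow₀ (le_max_right _ _) Module.finrank_pos.ne'
    _ = ∏ w : InfinitePlace L, max B 1 ^ w.mult := by
      rw [Finset.prod_pow_eq_pow_sum, InfinitePlace.sum_mult_eq]
    _ ≤ ∏ w : InfinitePlace L, w (P.eval (n : L)) ^ w.mult :=
      Finset.prod_le_prod (fun _ _ => by positivity) fun w _ =>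
        pow_le_pow_left₀ (by positivity) (hn w) _

theorem exists_lt_abs_norm_eval_add_natCast_mul {G : (𝓞 L)[X]} (hG : 0 < G.degree) (s : 𝓞 L)
    {d : 𝓞 L} (hd : d ≠ 0) (B : ℝ) :
    ∃ n : ℕ, B < |(Algebra.norm ℚ ((G.eval (s + n * d) : 𝓞 L) : L) : ℝ)| := by
  set P := (G.map (algebraMap (𝓞 L) L)).comp (C (s : L) + C (d : L) * X)
  have hlin : (C (s : L) + C (d : L) * X).natDegree = 1 := by
    rw [add_comm, natDegree_add_C, natDegree_C_mul_X _ (by simpa using hd)]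
  have hP : 0 < P.degree := by
    rwa [← natDegree_pos_iff_degree_pos, natDegree_comp, hlin, mul_one,
      natDegree_map_eq_of_injective RingOfIntegers.coe_injective, natDegree_pos_iff_degree_pos]
  obtain ⟨n, hn⟩ := ((tendsto_abs_norm_eval_natCast_atTop hP).eventually_gt_atTop B).exists
  refine ⟨n, ?_⟩
  have hPn : P.eval (n : L) = ((G.eval (s + n * d) : 𝓞 L) : L) := by
    rw [RingOfIntegers.coe_eq_algebraMap, ← eval_map_apply, eval_comp, eval_add, eval_mul,
      eval_C, eval_C, eval_X, map_add, map_mul, map_natCast, mul_comm]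
  rwa [← hPn]

theorem setOf_exists_eval_mem_asIdeal_infinite {G : (𝓞 L)[X]} (hG : 0 < G.degree) :
    {v : HeightOneSpectrum (𝓞 L) | ∃ w, G.eval w ∈ v.asIdeal}.Infinite := by
  intro hT
  obtain ⟨s, hs⟩ : ∃ s, G.eval s ≠ 0 := by
    by_contra! h
    exact ne_zero_of_degree_gt hG (Polynomial.funext (by simpa using h))
  set c := G.eval s
  obtain ⟨z, hz0, hzT⟩ := HeightOneSpectrum.exists_ne_zero_forall_mem_asIdeal hT
  obtain ⟨n, hn⟩ := exists_lt_abs_norm_eval_add_natCast_mul hG s (mul_ne_zero hs hz0)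
    |(Algebra.norm ℚ (c : L) : ℝ)|
  obtain ⟨r, hr⟩ := sub_dvd_eval_sub (s + n * (c * z)) s G
  -- `w ≡ 1` modulo every place in `T`, yet `c * w` has larger norm than `c`.
  set w := 1 + n * z * r
  have hGw : G.eval (s + n * (c * z)) = c * w := by linear_combination hr
  have hw : ¬IsUnit w := by
    rw [NumberField.isUnit_iff_norm, RingOfIntegers.coe_norm]
    intro hu
    rw [hGw, RingOfIntegers.coe_eq_algebraMap (c * w), map_mul, map_mul, Rat.cast_mul, abs_mul,
      ← Rat.cast_abs (Algebra.norm ℚ (w : L)), hu] at hn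
    simp at hn
  obtain ⟨p, hp, hwp⟩ := Ideal.exists_le_maximal _ (Ideal.span_singleton_ne_top hw)
  have hw_mem : w ∈ p := hwp (Ideal.mem_span_singleton_self w)
  let v : HeightOneSpectrum (𝓞 L) :=
    ⟨p, hp.isPrime, Ring.ne_bot_of_isMaximal_of_not_isField hp (RingOfIntegers.not_isField L)⟩
  have hzp : z ∈ p := hzT v ⟨_, by rw [hGw]; exact p.mul_mem_left _ hw_mem⟩
  refine hp.ne_top ((p.eq_top_iff_one).2 ?_)
  rw [show (1 : 𝓞 L) = w - n * z * r by ring]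
  exact p.sub_mem hw_mem (p.mul_mem_right _ (p.mul_mem_left _ hzp))

theorem exists_valuation_eval_lt_one {p : L[X]} (hp : 0 < p.degree)
    {T : Set (HeightOneSpectrum (𝓞 L))} (hT : T.Finite) :
    ∃ v ∉ T, ∃ x : L, v.valuation L x ≤ 1 ∧ v.valuation L (p.eval x) < 1 := by
  obtain ⟨b, hb, hG⟩ := IsLocalization.integerNormalization_spec (nonZeroDivisors (𝓞 L)) p
  set G := IsLocalization.integerNormalization (nonZeroDivisors (𝓞 L)) p
  have hb0 : (b : L) ≠ 0 := IsFractionRing.to_map_ne_zero_of_mem_nonZeroDivisors hb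
  have hGdeg : 0 < G.degree := by
    rwa [← degree_map_eq_of_injective RingOfIntegers.coe_injective, hG, ← algebraMap_smul L b p,
      smul_eq_C_mul, degree_C_mul hb0]
  obtain ⟨v, ⟨w, hw⟩, hvT⟩ := ((setOf_exists_eval_mem_asIdeal_infinite hGdeg).sdiff
    (hT.union (HeightOneSpectrum.finite_setOf_valuation_ne_one hb0))).nonempty
  obtain ⟨hvT, hvb⟩ := not_or.1 hvT
  refine ⟨v, hvT, w, v.valuation_le_one w, ?_⟩
  have hGw : algebraMap (𝓞 L) L (G.eval w) = b * p.eval (w : L) := by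
    rw [← eval_map_apply, hG, eval_smul, Algebra.smul_def]
  have : v.valuation L (algebraMap (𝓞 L) L (G.eval w)) < 1 :=
    (v.valuation_lt_one_iff_mem _).2 hw
  rwa [hGw, map_mul, not_not.1 hvb, one_mul] at this

theorem exists_valuation_eval_pow_mul_eq_exp {g h : L[X]} (hg : Irreducible g) (hgh : ¬g ∣ h)
    (m : ℕ) {T : Set (HeightOneSpectrum (𝓞 L))} (hT : T.Finite) :
    ∃ v ∉ T, ∃ u : L, v.valuation L ((g ^ m * h).eval u) = exp (-(m : ℤ)) := by
  obtain ⟨A₁, B₁, hAB₁⟩ := hg.separable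
  obtain ⟨A₂, B₂, hAB₂⟩ := hg.coprime_iff_not_dvd.2 hgh
  let S : Set L[X] := {g, derivative g, h, A₁, B₁, A₂, B₂}
  have hbad : {v : HeightOneSpectrum (𝓞 L) |
      ∃ q ∈ S, ∃ i, 1 < v.valuation L (q.coeff i)}.Finite := by
    refine ((Set.toFinite S).biUnion fun q _ =>
      HeightOneSpectrum.finite_setOf_exists_one_lt_valuation_coeff q).subset ?_
    rintro v ⟨q, hq, hi⟩
    exact Set.mem_biUnion hq hi
  obtain ⟨v, hvT, x, hx, hgx⟩ := exists_valuation_eval_lt_one hg.degree_pos (hT.union hbad)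
  obtain ⟨hvT, hvS⟩ := not_or.1 hvT
  have hint : ∀ q ∈ S, ∀ i, v.valuation L (q.coeff i) ≤ 1 :=
    fun q hq i => not_lt.1 fun hi => hvS ⟨q, hq, i, hi⟩
  obtain ⟨ϖ, hϖ⟩ := v.valuation_exists_uniformizer L
  have hg'x := (v.valuation L).map_eval_eq_one_of_add_mul_eq_one hAB₁ (hint A₁ (by simp [S]))
    (hint B₁ (by simp [S])) (hint _ (by simp [S])) hx hgx
  obtain ⟨u, hu, hgu⟩ :=
    (v.valuation L).exists_map_eval_eq_exp_neg_one (hint g (by simp [S])) hx hgx hg'x hϖ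
  have hhu := (v.valuation L).map_eval_eq_one_of_add_mul_eq_one hAB₂ (hint A₂ (by simp [S]))
    (hint B₂ (by simp [S])) (hint h (by simp [S])) hu (hgu ▸ exp_neg_one_lt_one)
  refine ⟨v, hvT, u, ?_⟩
  rw [eval_mul, eval_pow, map_mul, map_pow, hgu, hhu, mul_one, ← exp_nsmul, nsmul_eq_mul,
    mul_neg_one]

end NumberField

theorem Polynomial.rootMultiplicity_map_minpoly_pow_mul {K E : Type*} [Field K] [Field E]
    [Algebra K E] {α : E} (hα : IsSeparable K α) {h : K[X]} (hh : ¬minpoly K α ∣ h) (m : ℕ) :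
    rootMultiplicity α ((minpoly K α ^ m * h).map (algebraMap K E)) = m := by
  classical
  have hg0 : (minpoly K α).map (algebraMap K E) ≠ 0 := map_ne_zero hα.ne_zero
  have hh0 : h.map (algebraMap K E) ≠ 0 := map_ne_zero (by rintro rfl; exact hh (dvd_zero _))
  have hg : rootMultiplicity α ((minpoly K α).map (algebraMap K E)) = 1 :=
    le_antisymm (rootMultiplicity_le_one_of_separable (Separable.map hα) α)
      ((rootMultiplicity_pos hg0).2 (by simp [minpoly.aeval]))
  have hh : rootMultiplicity α (h.map (algebraMap K E)) = 0 :=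
    rootMultiplicity_eq_zero fun hroot => hh (minpoly.dvd K α (by simpa [aeval_def] using hroot))
  rw [Polynomial.map_mul, Polynomial.map_pow, ← count_roots,
    roots_mul (mul_ne_zero (pow_ne_zero _ hg0) hh0), roots_pow, Multiset.count_add,
    Multiset.count_nsmul, count_roots, count_roots, hg, hh, mul_one, add_zero]

theorem stmt_3_general (L : Type*) [Field L] [NumberField L] (k : ℕ)
    (f : Polynomial L) (hf : f ≠ 0) (α : AlgebraicClosure L)
    (hmult : ¬ k ∣ Polynomial.rootMultiplicity α
      (f.map (algebraMap L (AlgebraicClosure L)))) :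
    {q : Lˣ ⧸ (powMonoidHom k : Lˣ →* Lˣ).range |
      ∃ (u : L) (h : Polynomial.eval u f ≠ 0),
        (QuotientGroup.mk (Units.mk0 (Polynomial.eval u f) h) :
          Lˣ ⧸ (powMonoidHom k : Lˣ →* Lˣ).range) = q}.Infinite := by
  intro hfin
  have hg : Irreducible (minpoly L α) := minpoly.irreducible (Algebra.IsIntegral.isIntegral α)
  obtain ⟨h, hfgh, hgh⟩ :=
    (FiniteMultiplicity.of_prime_left hg.prime hf).exists_eq_pow_mul_and_not_dvd
  rw [hfgh, rootMultiplicity_map_minpoly_pow_mul (Algebra.IsSeparable.isSeparable L α) hgh]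
    at hmult
  obtain ⟨v, hv, u, hu⟩ := exists_valuation_eval_pow_mul_eq_exp hg hgh _
    (HeightOneSpectrum.finite_setOf_exists_mk_mem_valuation_ne_pow (R := 𝓞 L) k hfin)
  rw [← hfgh] at hu
  have hfu : f.eval u ≠ 0 := fun h0 => exp_ne_zero (by rw [← hu, h0, map_zero])
  simp only [Set.mem_ofPred_eq, not_exists, not_and, not_forall, not_not] at hv
  obtain ⟨γ, hγ⟩ := hv (Units.mk0 _ hfu) ⟨u, hfu, rfl⟩
  rw [Units.val_mk0, hu] at hγ
  exact hmult (Int.natCast_dvd_natCast.1 (Int.dvd_neg.1 (dvd_of_exp_eq_pow hγ)))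

/-- Value-distribution lemma: if `f ∈ L[u]` has a root in an algebraic closure
of `L` whose multiplicity is not divisible by `k`, then the values `f(u)` for
`u ∈ L`, `f(u) ≠ 0`, hit infinitely many classes in `Lˣ/(Lˣ)ᵏ`. -/
theorem stmt_3 (L : Type*) [Field L] [NumberField L] (k : ℕ) (hk : 2 ≤ k)
    (f : Polynomial L) (hf : f ≠ 0) (α : AlgebraicClosure L)
    (hroot : Polynomial.aeval α f = 0)
    (hmult : ¬ k ∣ Polynomial.rootMultiplicity α
      (f.map (algebraMap L (AlgebraicClosure L)))) :
    {q : Lˣ ⧸ (powMonoidHom k : Lˣ →* Lˣ).range |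
      ∃ (u : L) (h : Polynomial.eval u f ≠ 0),
        (QuotientGroup.mk (Units.mk0 (Polynomial.eval u f) h) :
          Lˣ ⧸ (powMonoidHom k : Lˣ →* Lˣ).range) = q}.Infinite :=
  stmt_3_general L k f hf α hmult
end

section
/- Let k ≥ 2 and n ≥ 2 be integers and let a, b, c, d ∈ ℚ with a and c not both zero. Then the set of rational points {(x, y, t) ∈ ℚ³ : (t^n + c·t + d)·y^k = x^n + a·x + b} is infinite. -/
/-- The surface `X : (tⁿ + c·t + d)·yᵏ = xⁿ + a·x + b` over `ℚ` has infinitely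
many rational points when `a` and `c` are not both zero. -/
theorem stmt_5 (k n : ℕ) (hk : 2 ≤ k) (hn : 2 ≤ n) (a b c d : ℚ)
    (hac : ¬(a = 0 ∧ c = 0)) :
    {p : ℚ × ℚ × ℚ |
      (p.2.2 ^ n + c * p.2.2 + d) * p.2.1 ^ k = p.1 ^ n + a * p.1 + b}.Infinite := by
  obtain ⟨e, rfl⟩ : ∃ e, n = e + 2 := ⟨n - 2, by omega⟩
  obtain ⟨g, rfl⟩ : ∃ g, k = g + 2 := ⟨k - 2, by omega⟩
  have hinj : Set.InjOn (fun x : ℚ => x ^ (e + 2)) (Set.Ici 0) :=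
    (pow_left_strictMonoOn₀ (by omega : e + 2 ≠ 0)).injOn
  have hS : {u : ℚ | 0 < u ∧ a - c * u ^ ((g + 2) * (e + 1)) ≠ 0}.Infinite := by
    by_cases hc : c = 0
    · have ha : a ≠ 0 := fun h => hac ⟨h, hc⟩
      refine (Set.Ioi_infinite (0:ℚ)).mono ?_
      intro u hu
      exact ⟨hu, by simp [hc, ha]⟩
    · have hfin : {u : ℚ | 0 ≤ u ∧ a - c * u ^ ((g + 2) * (e + 1)) = 0}.Finite := by
        apply Set.Subsingleton.finite
        rintro u ⟨hu0, hu1⟩ v ⟨hv0, hv1⟩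
        have h1 : u ^ ((g + 2) * (e + 1)) = v ^ ((g + 2) * (e + 1)) :=
          mul_left_cancel₀ hc ((sub_eq_zero.mp hu1).symm.trans (sub_eq_zero.mp hv1))
        exact (pow_left_strictMonoOn₀ (by positivity)).injOn hu0 hv0 h1
      refine ((Set.Ioi_infinite (0:ℚ)).diff hfin).mono ?_
      rintro u ⟨hu, hu2⟩
      exact ⟨hu, fun h => hu2 ⟨le_of_lt hu, h⟩⟩
  set σ : ℚ → ℚ × ℚ × ℚ := fun u =>
    (((d * u ^ ((g + 2) * (e + 1) + (g + 2)) - b) / (a - c * u ^ ((g + 2) * (e + 1)))),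
      u ^ (e + 2),
      ((d * u ^ ((g + 2) * (e + 1) + (g + 2)) - b) / (a - c * u ^ ((g + 2) * (e + 1)))) /
        u ^ (g + 2)) with hσ
  have hmem : ∀ u ∈ {u : ℚ | 0 < u ∧ a - c * u ^ ((g + 2) * (e + 1)) ≠ 0},
      σ u ∈ {p : ℚ × ℚ × ℚ |
        (p.2.2 ^ (e + 2) + c * p.2.2 + d) * p.2.1 ^ (g + 2) = p.1 ^ (e + 2) + a * p.1 + b} := by
    rintro u ⟨hu, hD⟩
    have hune : u ≠ 0 := ne_of_gt hu
    have hpk : (u : ℚ) ^ (g + 2) ≠ 0 := pow_ne_zero _ hune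
    simp only [hσ, Set.mem_setOf_eq]
    rw [pow_mul u (g + 2) (e + 1)] at hD
    rw [show (g + 2) * (e + 1) + (g + 2) = (g + 2) * (e + 2) by ring,
      pow_mul u (g + 2) (e + 2), pow_mul u (g + 2) (e + 1)]
    rw [show ((u ^ (e + 2)) ^ (g + 2) : ℚ) = (u ^ (g + 2)) ^ (e + 2) by
      rw [← pow_mul, ← pow_mul]; ring_nf]
    generalize hv : (u : ℚ) ^ (g + 2) = v at hD hpk ⊢
    generalize hx : (d * v ^ (e + 2) - b) / (a - c * v ^ (e + 1)) = x
    have key : x * (a - c * v ^ (e + 1)) = d * v ^ (e + 2) - b := by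
      rw [← hx]; exact div_mul_cancel₀ _ hD
    obtain ⟨t, rfl⟩ : ∃ t, x = t * v := ⟨x / v, (div_mul_cancel₀ x hpk).symm⟩
    rw [mul_div_cancel_right₀ _ hpk]
    linear_combination -key
  have hfinj : Set.InjOn σ {u : ℚ | 0 < u ∧ a - c * u ^ ((g + 2) * (e + 1)) ≠ 0} := by
    intro u hu v hv h
    have h2 : u ^ (e + 2) = v ^ (e + 2) := congrArg (fun p : ℚ × ℚ × ℚ => p.2.1) h
    exact hinj (le_of_lt hu.1) (le_of_lt hv.1) h2
  exact ((hS.image hfinj).mono (Set.image_subset_iff.mpr hmem))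
end

section
/- Let F be a field and let a, c, d ∈ F with c ≠ 0. For every u ∈ F with u ≠ 0, define x(u) = ((d²/c⁴)·u⁸ - 2·d·a·u⁴ + c⁴·a²)/u⁶, y(u) = ((-d/c⁴)·u⁴ + a)/u, and t(u) = ((-d/c)·u⁴ + c³·a)/u⁴. Then (t(u)⁴ + c·t(u) + d)·y(u)² = x(u)³ + a·x(u) and (c·t(u) + d)·y(u)² = a·x(u). -/
/-- The parametrization `σ : u ↦ (x(u), y(u), t(u))` lies on the total space of
the pencil `E^{f(t)} : (t⁴ + c·t + d)·y² = x³ + a·x` and on the curve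
`C : (c·t + d)·y² = a·x`. -/
theorem stmt_6 (F : Type*) [Field F] (a c d : F) (hc : c ≠ 0)
    (u : F) (hu : u ≠ 0) (x y t : F)
    (hx : x = ((d ^ 2 / c ^ 4) * u ^ 8 - 2 * d * a * u ^ 4 + c ^ 4 * a ^ 2) / u ^ 6)
    (hy : y = ((-d / c ^ 4) * u ^ 4 + a) / u)
    (ht : t = ((-d / c) * u ^ 4 + c ^ 3 * a) / u ^ 4) :
    (t ^ 4 + c * t + d) * y ^ 2 = x ^ 3 + a * x ∧
    (c * t + d) * y ^ 2 = a * x := by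
  have h1 : x = c ^ 4 * y ^ 2 / u ^ 4 := by rw [hx, hy]; field_simp; ring
  have h2 : c * t + d = a * c ^ 4 / u ^ 4 := by rw [ht]; field_simp; ring
  have h3 : t ^ 2 = c ^ 6 * y ^ 2 / u ^ 6 := by rw [ht, hy]; field_simp
  constructor
  · have e : (t ^ 4 + c * t + d) * y ^ 2 = (t ^ 2) ^ 2 * y ^ 2 + (c * t + d) * y ^ 2 := by ring
    rw [e, h3, h2, h1]; field_simp
  · rw [h2, h1]; field_simp
end
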